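/- Let c be an admissible coefficient function satisfying (Cubic values), (Normalization), (Separation) and (Symmetry). If a_1 ≥ 2, then for non-negative α with |α| ≤ 3, c(α,1) ≠ 0 if and only if α = e_{1,1}+e_{2,1}+e_{3,1}, and c(e_{1,1}+e_{2,1}+e_{3,1},1) = 1. If 1 = a_1 < a_2 ≤ a_3, then for non-negative α with |α| ≤ 2, c(α,1) ≠ 0 if and only if α = e_{2,1}+e_{3,1}, and c(e_{2,1}+e_{3,1},1) = 1. If 1 = a_1 = a_2 < a_3, then for non-negative α with |α| ≤ 1, c(α,1) ≠ 0 if and only if α = e_{3,1}, and c(e_{3,1},1) = 1. -/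

import Mathlib

/- Common framework: Frobenius manifolds for orbifold projective lines ℙ¹_A,
   following Ishibashi–Shiraishi–Takahashi. -/

namespace FrobeniusUniqueness

/-- A point index `(i, j)` labelling a flat coordinate `t_{i,j}`. -/
abbrev Pt : Type := Fin 3 × ℕ

/-- A non-negative element of `ℤ^{μ_A − 2}`: an exponent vector `α` with `α_{i,j} ∈ ℕ`. -/
abbrev Expv : Type := Pt →₀ ℕ

/-- The standard basis vector `e_{i,j}`. -/
noncomputable def e (i : Fin 3) (j : ℕ) : Expv := Finsupp.single (i, j) 1

/-- The length `|α|` of an exponent vector. -/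
def len (α : Expv) : ℕ := α.sum fun _ n => n

/-- A point index `(i,j)` is valid if `1 ≤ j ≤ a_i − 1`. -/
def ValidPt (A : Fin 3 → ℕ) (p : Pt) : Prop := 1 ≤ p.2 ∧ p.2 ≤ A p.1 - 1

/-- An exponent vector lies in `ℤ^{μ_A − 2}` iff it is supported on valid indices. -/
def Valid (A : Fin 3 → ℕ) (α : Expv) : Prop := ∀ p ∈ α.support, ValidPt A p

/-- The combinatorial factor `s_{a,b,c}`. -/
def sFactor (a b c : ℕ) : ℂ :=
  if a = b ∧ b = c then 6
  else if a ≠ b ∧ b ≠ c ∧ a ≠ c then 1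
  else 2

/-- The index type for the flat coordinates `t_1`, `t_{i,j}`, `t_{μ_A}`. -/
inductive Idx : Type where
  | one : Idx
  | pt : Fin 3 → ℕ → Idx
  | mu : Idx
deriving DecidableEq

/-- Validity of a flat coordinate index. -/
def ValidIdx (A : Fin 3 → ℕ) : Idx → Prop
  | .one => True
  | .pt i j => ValidPt A (i, j)
  | .mu => True

/-- The metric `η` in the frame `∂_1, ∂_{i,j}, ∂_{μ_A}`. -/
noncomputable def eta (A : Fin 3 → ℕ) : Idx → Idx → ℂ
  | .one, .mu => 1
  | .mu, .one => 1
  | .pt i j, .pt i' j' =>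
      if i = i' ∧ j + j' = A i ∧ 1 ≤ j ∧ j ≤ A i - 1 then (A i : ℂ)⁻¹ else 0
  | _, _ => 0

/-- The point indices occurring in an `Idx`. -/
def ptsOf : Idx → List Pt
  | .pt i j => [(i, j)]
  | _ => []

/-- The number of occurrences of `μ_A` in an `Idx`. -/
def muCount : Idx → ℕ
  | .mu => 1
  | _ => 0

/-- The factor produced when the monomial `t^{β + Σ_{p ∈ ps} e_p}` is differentiated by
`∏_{p ∈ ps} ∂_p`, leaving the monomial `t^β`. -/
noncomputable def dfac (β : Expv) : List Pt → ℕ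
  | [] => 1
  | p :: ps =>
      ((β + ((ps.map fun q => (Finsupp.single q 1 : Expv)).sum) + Finsupp.single p 1 : Expv) p)
        * dfac β ps

/-- `der A c a b d β m` is the coefficient of `t^β · e^{m·t_{μ_A}}` in `∂_a ∂_b ∂_d F`, where
`F = (1/2)t_1²t_{μ_A} + (1/2)t_1·Σ_{i,j}(1/a_i)t_{i,j}t_{i,a_i−j} + Σ_{α,m} c(α,m)t^α e^{m t_{μ_A}}`
is the potential of the coefficient function `c`.  In particular `∂_1∂_a∂_b F = η(∂_a,∂_b)`. -/
noncomputable def der (A : Fin 3 → ℕ) (c : Expv → ℕ → ℂ) (a b d : Idx) (β : Expv) (m : ℕ) : ℂ :=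
  if a = .one then (if β = 0 ∧ m = 0 then eta A b d else 0)
  else if b = .one then (if β = 0 ∧ m = 0 then eta A a d else 0)
  else if d = .one then (if β = 0 ∧ m = 0 then eta A a b else 0)
  else
    (m : ℂ) ^ (muCount a + muCount b + muCount d) *
      (dfac β (ptsOf a ++ ptsOf b ++ ptsOf d) : ℂ) *
      c (β + (((ptsOf a ++ ptsOf b ++ ptsOf d).map fun q => (Finsupp.single q 1 : Expv)).sum)) m

/-- The coefficient of `t^β · e^{m·t_{μ_A}}` in
`Σ_{σ,τ} ∂_a∂_b∂_σF · η^{στ} · ∂_τ∂_d∂_e F`, where `(η^{στ})` is the inverse matrix of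
`(η_{στ})` (so the only nonzero entries are `η^{1,μ_A} = η^{μ_A,1} = 1` and
`η^{(i,j),(i,a_i−j)} = a_i`). -/
noncomputable def quadTerm (A : Fin 3 → ℕ) (c : Expv → ℕ → ℂ) (a b d e' : Idx)
    (β : Expv) (m : ℕ) : ℂ :=
  ∑ x ∈ Finset.HasAntidiagonal.antidiagonal β, ∑ y ∈ Finset.HasAntidiagonal.antidiagonal m,
    (der A c a b .one x.1 y.1 * der A c .mu d e' x.2 y.2
     + der A c a b .mu x.1 y.1 * der A c .one d e' x.2 y.2
     + ∑ i : Fin 3, ∑ j ∈ Finset.Icc 1 (A i - 1),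
         (A i : ℂ) * der A c a b (.pt i j) x.1 y.1 * der A c (.pt i (A i - j)) d e' x.2 y.2)

/-- `χ_A = 1/a_1 + 1/a_2 + 1/a_3 − 1`. -/
noncomputable def chi (A : Fin 3 → ℕ) : ℚ := (A 0 : ℚ)⁻¹ + (A 1 : ℚ)⁻¹ + (A 2 : ℚ)⁻¹ - 1

/-- The degree of the monomial `t^α`: `Σ_{i,j} α_{i,j}·(a_i − j)/a_i`. -/
noncomputable def deg (A : Fin 3 → ℕ) (α : Expv) : ℚ :=
  α.sum fun p n => (n : ℚ) * (((A p.1 : ℚ) - (p.2 : ℚ)) / (A p.1 : ℚ))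

/-- A coefficient function is admissible if it satisfies (Homogeneity) and the WDVV
equations (coefficientwise, in the variables `t_{i,j}` and `e^{t_{μ_A}}`). -/
structure IsAdmissible (A : Fin 3 → ℕ) (c : Expv → ℕ → ℂ) : Prop where
  homog : ∀ α : Expv, Valid A α → ∀ m : ℕ, c α m ≠ 0 → deg A α + (m : ℚ) * chi A = 2
  wdvv : ∀ a b d e' : Idx, ValidIdx A a → ValidIdx A b → ValidIdx A d → ValidIdx A e' →
      ∀ β : Expv, Valid A β → ∀ m : ℕ,
        quadTerm A c a b d e' β m = quadTerm A c a d b e' β m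

/-- (Cubic values). -/
def CubicValues (A : Fin 3 → ℕ) (c : Expv → ℕ → ℂ) : Prop :=
  (∀ (i₁ i₂ i₃ : Fin 3) (j₁ j₂ j₃ : ℕ),
      ValidPt A (i₁, j₁) → ValidPt A (i₂, j₂) → ValidPt A (i₃, j₃) →
      ¬(i₁ = i₂ ∧ i₂ = i₃) → c (e i₁ j₁ + e i₂ j₂ + e i₃ j₃) 0 = 0) ∧
  (∀ (i : Fin 3) (j₁ j₂ j₃ : ℕ),
      ValidPt A (i, j₁) → ValidPt A (i, j₂) → ValidPt A (i, j₃) →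
      sFactor j₁ j₂ j₃ * c (e i j₁ + e i j₂ + e i j₃) 0 =
        if j₁ + j₂ + j₃ = A i then (A i : ℂ)⁻¹ else 0)

/-- (Normalization). -/
def Normalization (A : Fin 3 → ℕ) (c : Expv → ℕ → ℂ) : Prop :=
  (2 ≤ A 0 → c (e 0 1 + e 1 1 + e 2 1) 1 = 1) ∧
  (A 0 = 1 → A 0 < A 1 → c (e 1 1 + e 2 1) 1 = 1) ∧
  (A 0 = 1 → A 1 = 1 → A 1 < A 2 → c (e 2 1) 1 = 1) ∧
  (A 0 = 1 → A 1 = 1 → A 2 = 1 → c 0 1 = 1)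

/-- (Separation). -/
def Separation (A : Fin 3 → ℕ) (c : Expv → ℕ → ℂ) : Prop :=
  ∀ γ : Expv, Valid A γ →
    ∀ (i₁ i₂ : Fin 3) (j₁ j₂ : ℕ), i₁ ≠ i₂ → ValidPt A (i₁, j₁) → ValidPt A (i₂, j₂) →
      e i₁ j₁ + e i₂ j₂ ≤ γ → c γ 0 = 0

/-- The automorphism of `ℤ^{μ_A−2}` exchanging `e_{i₁,j}` and `e_{i₂,j}` for all `j`. -/
def swapExp (i₁ i₂ : Fin 3) (α : Expv) : Expv :=
  Finsupp.equivMapDomain ((Equiv.swap i₁ i₂).prodCongr (Equiv.refl ℕ)) α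

/-- (Symmetry). -/
def Symmetry (A : Fin 3 → ℕ) (c : Expv → ℕ → ℂ) : Prop :=
  ∀ i₁ i₂ : Fin 3, A i₁ = A i₂ → ∀ α : Expv, Valid A α → ∀ m : ℕ,
    c (swapExp i₁ i₂ α) m = c α m

/-!
The coefficients `c(α, 1)` are controlled by a single WDVV equation. For a component `k` with
`a_k ≥ 2`, compare the two sides of WDVV for `(∂_{μ_A}, ∂_b, ∂_{k,1}, ∂_{k,a_k-1})` at
`t^β e^{t_{μ_A}}`, where `β` has no entry in component `k`. Every degree-zero third derivative
through `∂_{k,a_k-1}` that can appear vanishes, by (Cubic values) when only cubic terms are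
involved and by (Separation) otherwise, so the equation collapses to
`c(β + e_b, 1) · η(∂_{k,1}, ∂_{k,a_k-1}) = c(β + e_{k,1}, 1) · η(∂_b, ∂_{k,a_k-1})`; the right
side is zero unless `b = (k,1)`. Hence if `c(α, 1) ≠ 0`, then `α` meets every component `k`
with `a_k ≥ 2` (Homogeneity excludes `α = 0`), and if it meets `k` only once, then at `(k,1)`.
When `|α|` is at most the number of such components, each is met exactly once, which pins `α`
down; (Normalization) gives the value.
-/

lemma len_eq_degree (α : Expv) : len α = α.degree := rfl

lemma eq_of_le_of_len_le {α β : Expv} (hle : β ≤ α) (hlen : len α ≤ len β) : α = β := by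
  obtain ⟨γ, rfl⟩ := exists_add_of_le hle
  simp_all [len_eq_degree, Finsupp.degree_eq_zero_iff]

lemma single_one_le_of_mem_support {ι : Type*} {α : ι →₀ ℕ} {p : ι} (hp : p ∈ α.support) :
    Finsupp.single p 1 ≤ α :=
  Finsupp.single_le_iff.mpr (Nat.one_le_iff_ne_zero.mpr (Finsupp.mem_support_iff.mp hp))

lemma sum_single_one_le_of_subset_support {ι : Type*} {S : Finset ι} {α : ι →₀ ℕ}
    (hS : S ⊆ α.support) : ∑ p ∈ S, Finsupp.single p 1 ≤ α := by
  classical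
  rw [← Finsupp.orderIsoMultiset.le_iff_le, Finsupp.coe_orderIsoMultiset,
    Finsupp.toMultiset_sum_single, one_nsmul, Multiset.le_iff_subset S.nodup]
  exact fun p hp => (Finsupp.mem_toMultiset α p).mpr (hS hp)

lemma len_sum_single_one (S : Finset Pt) : len (∑ p ∈ S, Finsupp.single p 1) = S.card := by
  simp [len_eq_degree]

section Validity

variable {A : Fin 3 → ℕ}

lemma Valid.mono {α β : Expv} (hα : Valid A α) (hle : β ≤ α) : Valid A β :=
  fun p hp => hα p (Finsupp.support_mono hle hp)

lemma Valid.add {α β : Expv} (hα : Valid A α) (hβ : Valid A β) : Valid A (α + β) := by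
  intro p hp
  rcases Finset.mem_union.mp (Finsupp.support_add hp) with h | h
  exacts [hα p h, hβ p h]

lemma valid_single_one {p : Pt} (hp : ValidPt A p) : Valid A (Finsupp.single p 1) := by
  intro q hq
  rwa [Finset.mem_singleton.mp (Finsupp.support_single_subset hq)]

lemma validPt_one {k : Fin 3} (hk : 2 ≤ A k) : ValidPt A (k, 1) :=
  ⟨le_rfl, Nat.le_sub_one_of_lt hk⟩

lemma validPt_sub_one {k : Fin 3} (hk : 2 ≤ A k) : ValidPt A (k, A k - 1) :=
  ⟨Nat.le_sub_one_of_lt hk, le_rfl⟩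

end Validity

lemma chi_lt_two {A : Fin 3 → ℕ} {k : Fin 3} (hk : 2 ≤ A k) : chi A < 2 := by
  have hk' : (A k : ℚ)⁻¹ ≤ 2⁻¹ := inv_anti₀ two_pos (by exact_mod_cast hk)
  have h0 : (A 0 : ℚ)⁻¹ ≤ 1 := Nat.cast_inv_le_one _
  have h1 : (A 1 : ℚ)⁻¹ ≤ 1 := Nat.cast_inv_le_one _
  have h2 : (A 2 : ℚ)⁻¹ ≤ 1 := Nat.cast_inv_le_one _
  unfold chi
  fin_cases k <;> simp only [Fin.zero_eta, Fin.mk_one, Fin.reduceFinMk] at hk' <;> linarith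

lemma sFactor_ne_zero (a b c : ℕ) : sFactor a b c ≠ 0 := by
  unfold sFactor
  split_ifs <;> norm_num

section Coefficients

variable {A : Fin 3 → ℕ} {c : Expv → ℕ → ℂ}

lemma IsAdmissible.coeff_zero_one (hadm : IsAdmissible A c) {k : Fin 3} (hk : 2 ≤ A k) :
    c 0 1 = 0 := by
  by_contra h
  have hdeg := hadm.homog 0 (by simp [Valid]) 1 h
  simp only [deg, Finsupp.sum_zero_index, Nat.cast_one, one_mul, zero_add] at hdeg
  exact (chi_lt_two hk).ne hdeg

lemma CubicValues.coeff_add_dual (hcub : CubicValues A c) {k : Fin 3} (hk : 2 ≤ A k)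
    {p q : Pt} (hp : ValidPt A p) (hq : ValidPt A q) :
    c (Finsupp.single p 1 + Finsupp.single q 1 + Finsupp.single (k, A k - 1) 1) 0 = 0 := by
  obtain ⟨i, j⟩ := p
  obtain ⟨i', j'⟩ := q
  by_cases hsame : i = i' ∧ i' = k
  · obtain ⟨rfl, rfl⟩ := hsame
    have h := hcub.2 i j j' (A i - 1) hp hq (validPt_sub_one hk)
    rw [if_neg (by obtain ⟨_, _⟩ := hp; obtain ⟨_, _⟩ := hq; omega)] at h
    exact (mul_eq_zero.mp h).resolve_left (sFactor_ne_zero _ _ _)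
  · exact hcub.1 i i' k j j' (A k - 1) hp hq (validPt_sub_one hk) hsame

lemma Separation.coeff_add_dual (hsep : Separation A c) {k : Fin 3} (hk : 2 ≤ A k)
    {δ γ : Expv} (hδ : Valid A δ) (hδk : ∀ p ∈ δ.support, p.1 ≠ k) (hδ0 : δ ≠ 0)
    (hγ : Valid A γ) :
    c (δ + γ + Finsupp.single (k, A k - 1) 1) 0 = 0 := by
  obtain ⟨w, hw⟩ := Finsupp.support_nonempty_iff.mpr hδ0
  refine hsep _ ((hδ.add hγ).add (valid_single_one (validPt_sub_one hk))) w.1 k w.2 (A k - 1)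
    (hδk w hw) (hδ w hw) (validPt_sub_one hk) (add_le_add ?_ le_rfl)
  exact (single_one_le_of_mem_support hw).trans le_self_add

lemma quadTerm_mu_one_eq {u v w : Pt} {β : Expv}
    (H : ∀ i, ∀ j ∈ Finset.Icc 1 (A i - 1), ∀ δ ≤ β,
      c (δ + Finsupp.single (i, A i - j) 1 + Finsupp.single v 1 + Finsupp.single w 1) 0 = 0) :
    quadTerm A c .mu (.pt u.1 u.2) (.pt v.1 v.2) (.pt w.1 w.2) β 1 =
      (β u + 1 : ℂ) * c (β + Finsupp.single u 1) 1 * eta A (.pt v.1 v.2) (.pt w.1 w.2) := by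
  unfold quadTerm
  calc _ = ∑ x ∈ Finset.HasAntidiagonal.antidiagonal β, if x.2 = 0 then
        (x.1 u + 1 : ℂ) * c (x.1 + Finsupp.single u 1) 1 * eta A (.pt v.1 v.2) (.pt w.1 w.2)
        else 0 := by
        refine Finset.sum_congr rfl fun x hx => ?_
        have hx2 : x.2 ≤ β := (Finset.HasAntidiagonal.mem_antidiagonal.mp hx) ▸ le_add_self
        have hpt : ∑ i, ∑ j ∈ Finset.Icc 1 (A i - 1),
            (A i : ℂ) * der A c .mu (.pt u.1 u.2) (.pt i j) x.1 1
              * der A c (.pt i (A i - j)) (.pt v.1 v.2) (.pt w.1 w.2) x.2 0 = 0 := by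
          refine Finset.sum_eq_zero fun i _ => Finset.sum_eq_zero fun j hj => ?_
          have h := H i j hj x.2 hx2
          simp only [add_assoc] at h
          simp [der, ptsOf, h]
        rw [Finset.Nat.sum_antidiagonal_succ, Finset.Nat.antidiagonal_zero, Finset.sum_singleton]
        dsimp only
        rw [zero_add, hpt]
        split_ifs with h0 <;> simp [h0, der, muCount, ptsOf, dfac, eta]
    _ = _ := by
        refine (Finset.sum_eq_single_of_mem (β, 0) (by simp)
          fun x hx hne => if_neg fun h0 => hne ?_).trans (if_pos rfl)
        have hx' := Finset.HasAntidiagonal.mem_antidiagonal.mp hx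
        rw [h0, add_zero] at hx'
        exact Prod.ext hx' h0

lemma coeff_add_single_eq_zero (hadm : IsAdmissible A c) (hcub : CubicValues A c)
    (hsep : Separation A c) {k : Fin 3} (hk : 2 ≤ A k) {β : Expv} (hβ : Valid A β)
    (hβk : ∀ p ∈ β.support, p.1 ≠ k) {b : Pt} (hb : ValidPt A b) (hbk : b ≠ (k, 1)) :
    c (β + Finsupp.single b 1) 1 = 0 := by
  have hvanish : ∀ v : Pt, ValidPt A v → ∀ i, ∀ j ∈ Finset.Icc 1 (A i - 1), ∀ δ ≤ β,
      c (δ + Finsupp.single (i, A i - j) 1 + Finsupp.single v 1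
        + Finsupp.single (k, A k - 1) 1) 0 = 0 := by
    intro v hv i j hj δ hδ
    have hp : ValidPt A (i, A i - j) := by
      rw [Finset.mem_Icc] at hj
      exact ⟨by dsimp only; omega, by dsimp only; omega⟩
    rcases eq_or_ne δ 0 with rfl | hδ0
    · rw [zero_add]
      exact hcub.coeff_add_dual hk hp hv
    · rw [add_assoc δ]
      exact hsep.coeff_add_dual hk (hβ.mono hδ) (fun p hp => hβk p (Finsupp.support_mono hδ hp))
        hδ0 ((valid_single_one hp).add (valid_single_one hv))
  have hwdvv := hadm.wdvv .mu (.pt b.1 b.2) (.pt k 1) (.pt k (A k - 1)) trivial hb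
    (validPt_one hk) (validPt_sub_one hk) β hβ 1
  rw [quadTerm_mu_one_eq (hvanish _ (validPt_one hk)),
    quadTerm_mu_one_eq (u := (k, 1)) (hvanish b hb)] at hwdvv
  dsimp only at hwdvv
  have hη₁ : eta A (.pt k 1) (.pt k (A k - 1)) = (A k : ℂ)⁻¹ :=
    if_pos ⟨rfl, by omega, le_rfl, by omega⟩
  have hη₂ : eta A (.pt b.1 b.2) (.pt k (A k - 1)) = 0 := by
    refine if_neg ?_
    rintro ⟨hbk', hsum, -⟩
    exact hbk (Prod.ext hbk' (by rw [hbk'] at hsum; omega))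
  rw [hη₁, hη₂, mul_zero] at hwdvv
  have hAk : A k ≠ 0 := by omega
  simpa [Nat.cast_add_one_ne_zero, hAk] using hwdvv

lemma exists_mem_support_of_coeff_ne_zero (hadm : IsAdmissible A c) (hcub : CubicValues A c)
    (hsep : Separation A c) {α : Expv} (hα : Valid A α) (hc : c α 1 ≠ 0)
    {k : Fin 3} (hk : 2 ≤ A k) : ∃ j, (k, j) ∈ α.support := by
  by_contra! hnot
  have hα0 : α ≠ 0 := by
    rintro rfl
    exact hc (hadm.coeff_zero_one hk)
  obtain ⟨b, hb⟩ := Finsupp.support_nonempty_iff.mpr hα0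
  obtain ⟨β, rfl⟩ := exists_add_of_le (single_one_le_of_mem_support hb)
  apply hc
  rw [add_comm]
  exact coeff_add_single_eq_zero hadm hcub hsep hk (hα.mono le_add_self)
    (fun p hp hpk => hnot p.2 (hpk ▸ Finsupp.support_mono le_add_self hp)) (hα b hb)
    (fun hbk => hnot b.2 (by rwa [hbk] at hb ⊢))

theorem eq_sum_of_coeff_ne_zero (hadm : IsAdmissible A c) (hcub : CubicValues A c)
    (hsep : Separation A c) (K : Finset (Fin 3)) (hK : ∀ k ∈ K, 2 ≤ A k) {α : Expv}
    (hα : Valid A α) (hlen : len α ≤ K.card) (hc : c α 1 ≠ 0) : α = ∑ k ∈ K, e k 1 := by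
  choose! j hj using fun k hk =>
    exists_mem_support_of_coeff_ne_zero hadm hcub hsep hα hc (hK k hk)
  have hinj : Set.InjOn (fun k => (k, j k)) K := fun _ _ _ _ h => congrArg Prod.fst h
  set S := K.image fun k => (k, j k)
  have hαS : α = ∑ p ∈ S, Finsupp.single p 1 := by
    refine eq_of_le_of_len_le (sum_single_one_le_of_subset_support ?_) ?_
    · simpa [S, Finset.image_subset_iff] using hj
    · rwa [len_sum_single_one, Finset.card_image_of_injOn hinj]
  have hj1 : ∀ k ∈ K, j k = 1 := by
    intro k hk
    have hsplit :
        α = (∑ p ∈ S.erase (k, j k), Finsupp.single p 1) + Finsupp.single (k, j k) 1 := by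
      rw [hαS, Finset.sum_erase_add _ _ (Finset.mem_image_of_mem _ hk)]
    by_contra hne
    refine hc (hsplit ▸ coeff_add_single_eq_zero hadm hcub hsep (hK k hk)
      (hα.mono (hsplit ▸ le_self_add)) ?_ (hα _ (hj k hk)) fun h => hne (congrArg Prod.snd h))
    intro p hp hpk
    obtain ⟨hpne, k', -, rfl⟩ : p ≠ (k, j k) ∧ ∃ k' ∈ K, (k', j k') = p := by
      simpa [S] using Finsupp.support_finsetSum hp
    exact hpne (hpk ▸ rfl)
  rw [hαS, Finset.sum_image hinj]
  exact Finset.sum_congr rfl fun k hk => by rw [hj1 k hk]; rfl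

lemma coeff_one_ne_zero_iff (hadm : IsAdmissible A c) (hcub : CubicValues A c)
    (hsep : Separation A c) (K : Finset (Fin 3)) (hK : ∀ k ∈ K, 2 ≤ A k) {τ : Expv}
    (hτ : ∑ k ∈ K, e k 1 = τ) (hτc : c τ 1 = 1) {α : Expv} (hα : Valid A α)
    (hlen : len α ≤ K.card) : c α 1 ≠ 0 ↔ α = τ :=
  ⟨fun hc => hτ ▸ eq_sum_of_coeff_ne_zero hadm hcub hsep K hK hα hlen hc,
    fun h => h ▸ hτc ▸ one_ne_zero⟩

end Coefficients

theorem degree_one_coefficients_general (A : Fin 3 → ℕ) (hA01 : A 0 ≤ A 1) (hA12 : A 1 ≤ A 2)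
    (c : Expv → ℕ → ℂ) (hadm : IsAdmissible A c) (hcub : CubicValues A c)
    (hnorm : Normalization A c) (hsep : Separation A c) :
    (2 ≤ A 0 →
      (∀ α : Expv, Valid A α → len α ≤ 3 → (c α 1 ≠ 0 ↔ α = e 0 1 + e 1 1 + e 2 1)) ∧
      c (e 0 1 + e 1 1 + e 2 1) 1 = 1) ∧
    (A 0 = 1 → A 0 < A 1 →
      (∀ α : Expv, Valid A α → len α ≤ 2 → (c α 1 ≠ 0 ↔ α = e 1 1 + e 2 1)) ∧
      c (e 1 1 + e 2 1) 1 = 1) ∧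
    (A 0 = 1 → A 1 = 1 → A 1 < A 2 →
      (∀ α : Expv, Valid A α → len α ≤ 1 → (c α 1 ≠ 0 ↔ α = e 2 1)) ∧
      c (e 2 1) 1 = 1) := by
  refine ⟨fun h0 => ⟨fun α hα hlen => ?_, hnorm.1 h0⟩,
    fun h0 h01 => ⟨fun α hα hlen => ?_, hnorm.2.1 h0 h01⟩,
    fun h0 h1 h12 => ⟨fun α hα hlen => ?_, hnorm.2.2.1 h0 h1 h12⟩⟩
  · exact coeff_one_ne_zero_iff hadm hcub hsep {0, 1, 2} (by simp; omega) (by simp [add_assoc])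
      (hnorm.1 h0) hα hlen
  · exact coeff_one_ne_zero_iff hadm hcub hsep {1, 2} (by simp; omega) (by simp)
      (hnorm.2.1 h0 h01) hα hlen
  · exact coeff_one_ne_zero_iff hadm hcub hsep {2} (by simp; omega) (by simp)
      (hnorm.2.2.1 h0 h1 h12) hα hlen

/-- Proposition 3.8. -/
theorem degree_one_coefficients (A : Fin 3 → ℕ) (hA : ∀ i, 1 ≤ A i) (hA01 : A 0 ≤ A 1) (hA12 : A 1 ≤ A 2)
    (c : Expv → ℕ → ℂ) (hadm : IsAdmissible A c) (hcub : CubicValues A c)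
    (hnorm : Normalization A c) (hsep : Separation A c) (hsym : Symmetry A c) :
    (2 ≤ A 0 →
      (∀ α : Expv, Valid A α → len α ≤ 3 → (c α 1 ≠ 0 ↔ α = e 0 1 + e 1 1 + e 2 1)) ∧
      c (e 0 1 + e 1 1 + e 2 1) 1 = 1) ∧
    (A 0 = 1 → A 0 < A 1 →
      (∀ α : Expv, Valid A α → len α ≤ 2 → (c α 1 ≠ 0 ↔ α = e 1 1 + e 2 1)) ∧
      c (e 1 1 + e 2 1) 1 = 1) ∧
    (A 0 = 1 → A 1 = 1 → A 1 < A 2 →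
      (∀ α : Expv, Valid A α → len α ≤ 1 → (c α 1 ≠ 0 ↔ α = e 2 1)) ∧
      c (e 2 1) 1 = 1) :=
  degree_one_coefficients_general A hA01 hA12 c hadm hcub hnorm hsep

end FrobeniusUniqueness
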